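/- arXiv:1909.03441 — 2 statements merged into one kernel-verified Lean document; each statement's English description precedes it below -/
import Mathlib

section
/- The function f is Fréchet differentiable everywhere, and for every W, Z ∈ ℝ^{d×q} its derivative at W in direction Z equals Tr(Zᵀ Φ(W) W); equivalently, the gradient of f at W is Φ(W) W. -/
open Matrix BigOperators

attribute [local instance] Matrix.normedAddCommGroup Matrix.normedSpace

/-!
For a symmetric bounded bilinear form `b`, the map `v ↦ b (v, v)` has derivative `z ↦ 2 b (z, w)`
at `w`, so by the chain rule `v ↦ exp (-b (v, v) / (2τ))` has derivative
`z ↦ -τ⁻¹ exp (-b (w, w) / (2τ)) b (z, w)`. Applied to `b (X, Y) = tr (Xᵀ A Y)` with `A`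
symmetric, the weighted sum of these derivatives is `Z ↦ tr (Zᵀ Φ(W) W)`, by linearity of
`A ↦ tr (Zᵀ A W)`.
-/

section SymmetricBilinear

variable {E : Type*} [NormedAddCommGroup E] [NormedSpace ℝ E]

lemma IsBoundedBilinearMap.exists_hasFDerivAt_apply_self {b : E × E → ℝ}
    (hb : IsBoundedBilinearMap ℝ b) (hsymm : ∀ x y, b (x, y) = b (y, x)) (w : E) :
    ∃ L : E →L[ℝ] ℝ, HasFDerivAt (fun v => b (v, v)) L w ∧ ∀ z, L z = 2 * b (z, w) :=
  ⟨_, (hb.hasFDerivAt (w, w)).comp w (f := fun v => (v, v))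
    ((hasFDerivAt_id w).prodMk (hasFDerivAt_id w)), fun z => by simp [hsymm w z, two_mul]⟩

lemma IsBoundedBilinearMap.exists_hasFDerivAt_exp_neg_apply_self_div {b : E × E → ℝ}
    (hb : IsBoundedBilinearMap ℝ b) (hsymm : ∀ x y, b (x, y) = b (y, x)) (τ : ℝ) (w : E) :
    ∃ L : E →L[ℝ] ℝ, HasFDerivAt (fun v => Real.exp (-b (v, v) / (2 * τ))) L w ∧
      ∀ z, L z = -(Real.exp (-b (w, w) / (2 * τ)) / τ) * b (z, w) := by
  obtain ⟨L, hL, hLz⟩ := hb.exists_hasFDerivAt_apply_self hsymm w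
  simp only [div_eq_mul_inv]
  refine ⟨_, (hL.neg.mul_const (2 * τ)⁻¹).exp, fun z => ?_⟩
  simp only [Pi.neg_apply, _root_.neg_apply, _root_.smul_apply, smul_eq_mul, hLz]
  ring

lemma exists_hasFDerivAt_neg_sum_mul_exp_neg_apply_self {ι : Type*} (s : Finset ι)
    {b : ι → E × E → ℝ} (hb : ∀ i, IsBoundedBilinearMap ℝ (b i))
    (hsymm : ∀ i x y, b i (x, y) = b i (y, x)) (γ : ι → ℝ) (τ : ℝ) (w : E) :
    ∃ L : E →L[ℝ] ℝ,
      HasFDerivAt (fun v => -∑ i ∈ s, γ i * Real.exp (-b i (v, v) / (2 * τ))) L w ∧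
      ∀ z, L z = ∑ i ∈ s, γ i / τ * Real.exp (-b i (w, w) / (2 * τ)) * b i (z, w) := by
  choose L hL hLz using fun i => (hb i).exists_hasFDerivAt_exp_neg_apply_self_div (hsymm i) τ w
  refine ⟨_, (HasFDerivAt.fun_sum fun i _ => (hL i).const_mul (γ i)).neg, fun z => ?_⟩
  simp only [_root_.neg_apply, _root_.sum_apply, _root_.smul_apply, smul_eq_mul, hLz,
    ← Finset.sum_neg_distrib]
  exact Finset.sum_congr rfl fun i _ => by ring

end SymmetricBilinear

namespace Matrix

variable {m n : Type*} [Fintype m] [Fintype n]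

lemma isBoundedBilinearMap_trace_transpose_mul_mul (A : Matrix m m ℝ) :
    IsBoundedBilinearMap ℝ fun XY : Matrix m n ℝ × Matrix m n ℝ => trace (XY.1ᵀ * A * XY.2) :=
  (LinearMap.mk₂ ℝ (fun X Y : Matrix m n ℝ => trace (Xᵀ * A * Y))
    (fun X X' Y => by simp [Matrix.add_mul, trace_add])
    (fun c X Y => by simp [trace_smul])
    (fun X Y Y' => by simp [Matrix.mul_add, trace_add])
    (fun c X Y => by simp [trace_smul])).toContinuousBilinearMap.isBoundedBilinearMap

lemma trace_transpose_mul_mul_comm {A : Matrix m m ℝ} (hA : A.IsSymm) (X Y : Matrix m n ℝ) :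
    trace (Xᵀ * A * Y) = trace (Yᵀ * A * X) := by
  rw [← trace_transpose, transpose_mul, transpose_mul, transpose_transpose, hA.eq,
    Matrix.mul_assoc]

end Matrix

theorem stmt1_general {n d q : ℕ}
    (A : Fin n → Fin n → Matrix (Fin d) (Fin d) ℝ)
    (hA : ∀ i j, (A i j)ᵀ = A i j)
    (γ : Fin n → Fin n → ℝ) (σ : ℝ)
    (f : Matrix (Fin d) (Fin q) ℝ → ℝ)
    (hf : ∀ W, f W = -∑ i, ∑ j, γ i j *
        Real.exp (-(Matrix.trace (Wᵀ * A i j * W)) / (2 * σ ^ 2)))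
    (Φ : Matrix (Fin d) (Fin q) ℝ → Matrix (Fin d) (Fin d) ℝ)
    (hΦ : ∀ W, Φ W = ∑ i, ∑ j, (γ i j / σ ^ 2 *
        Real.exp (-(Matrix.trace (Wᵀ * A i j * W)) / (2 * σ ^ 2))) • A i j) :
    ∀ W, ∃ f' : Matrix (Fin d) (Fin q) ℝ →L[ℝ] ℝ,
      HasFDerivAt f f' W ∧
      ∀ Z, f' Z = Matrix.trace (Zᵀ * Φ W * W) := by
  intro W
  obtain ⟨L, hL, hLZ⟩ := exists_hasFDerivAt_neg_sum_mul_exp_neg_apply_self .univ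
    (fun ij : Fin n × Fin n => isBoundedBilinearMap_trace_transpose_mul_mul (A ij.1 ij.2))
    (fun ij => trace_transpose_mul_mul_comm (hA ij.1 ij.2)) (fun ij => γ ij.1 ij.2) (σ ^ 2) W
  refine ⟨L, hL.congr_of_eventuallyEq (.of_forall fun V => ?_), fun Z => (hLZ Z).trans ?_⟩
  · simp [hf, Fintype.sum_prod_type]
  · simp [hΦ, Fintype.sum_prod_type, Matrix.sum_mul, Matrix.mul_sum, trace_sum, trace_smul]

theorem stmt1 {n d q : ℕ}
    (A : Fin n → Fin n → Matrix (Fin d) (Fin d) ℝ)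
    (hA : ∀ i j, (A i j)ᵀ = A i j)
    (γ : Fin n → Fin n → ℝ) (σ : ℝ) (hσ : 0 < σ)
    (f : Matrix (Fin d) (Fin q) ℝ → ℝ)
    (hf : ∀ W, f W = -∑ i, ∑ j, γ i j *
        Real.exp (-(Matrix.trace (Wᵀ * A i j * W)) / (2 * σ ^ 2)))
    (Φ : Matrix (Fin d) (Fin q) ℝ → Matrix (Fin d) (Fin d) ℝ)
    (hΦ : ∀ W, Φ W = ∑ i, ∑ j, (γ i j / σ ^ 2 *
        Real.exp (-(Matrix.trace (Wᵀ * A i j * W)) / (2 * σ ^ 2))) • A i j) :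
    ∀ W, ∃ f' : Matrix (Fin d) (Fin q) ℝ →L[ℝ] ℝ,
      HasFDerivAt f f' W ∧
      ∀ Z, f' Z = Matrix.trace (Zᵀ * Φ W * W) :=
  stmt1_general A hA γ σ f hf Φ hΦ
end

section
/- Let Φ ∈ ℝ^{d×d}, W ∈ ℝ^{d×q}, W̄ ∈ ℝ^{d×(d−q)} satisfy Φ W = W Λ, Φ W̄ = W̄ Λ̄, WᵀW = I, W̄ᵀW̄ = I, W̄ᵀW = 0, with Λ ∈ ℝ^{q×q} and Λ̄ ∈ ℝ^{(d−q)×(d−q)} diagonal. Let Z = W̄ P̄ + W P with P ∈ ℝ^{q×q} skew-symmetric and P̄ ∈ ℝ^{(d−q)×q}. Then Tr(Zᵀ Φ Z) − Tr(Zᵀ Z Λ) = Tr(P̄ᵀ Λ̄ P̄) − Tr(P̄ Λ P̄ᵀ). -/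
open Matrix

theorem stmt9 {d q : ℕ}
    (Φ : Matrix (Fin d) (Fin d) ℝ)
    (W : Matrix (Fin d) (Fin q) ℝ) (Wb : Matrix (Fin d) (Fin (d - q)) ℝ)
    (Λ : Matrix (Fin q) (Fin q) ℝ) (Λb : Matrix (Fin (d - q)) (Fin (d - q)) ℝ)
    (hΦW : Φ * W = W * Λ) (hΦWb : Φ * Wb = Wb * Λb)
    (hW : Wᵀ * W = 1) (hWb : Wbᵀ * Wb = 1) (hWbW : Wbᵀ * W = 0)
    (hΛ : Λ.IsDiag) (hΛb : Λb.IsDiag)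
    (P : Matrix (Fin q) (Fin q) ℝ) (hP : Pᵀ = -P)
    (Pb : Matrix (Fin (d - q)) (Fin q) ℝ)
    (Z : Matrix (Fin d) (Fin q) ℝ) (hZ : Z = Wb * Pb + W * P) :
    Matrix.trace (Zᵀ * Φ * Z) - Matrix.trace (Zᵀ * Z * Λ)
      = Matrix.trace (Pbᵀ * Λb * Pb) - Matrix.trace (Pb * Λ * Pbᵀ) := by
  have hWWb : Wᵀ * Wb = 0 := by
    have := congrArg Matrix.transpose hWbW
    simpa [Matrix.transpose_mul] using this
  have hW' : ∀ (X : Matrix (Fin q) (Fin q) ℝ), Wᵀ * (W * X) = X := fun X => by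
    rw [← Matrix.mul_assoc, hW, Matrix.one_mul]
  have hWb' : ∀ (X : Matrix (Fin (d - q)) (Fin q) ℝ), Wbᵀ * (Wb * X) = X := fun X => by
    rw [← Matrix.mul_assoc, hWb, Matrix.one_mul]
  have hWbW' : ∀ (X : Matrix (Fin q) (Fin q) ℝ), Wbᵀ * (W * X) = 0 := fun X => by
    rw [← Matrix.mul_assoc, hWbW, Matrix.zero_mul]
  have hWWb' : ∀ (X : Matrix (Fin (d - q)) (Fin q) ℝ), Wᵀ * (Wb * X) = 0 := fun X => by
    rw [← Matrix.mul_assoc, hWWb, Matrix.zero_mul]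
  have hA : Φ * (Wb * Pb + W * P) = Wb * (Λb * Pb) + W * (Λ * P) := by
    rw [Matrix.mul_add, ← Matrix.mul_assoc, ← Matrix.mul_assoc, hΦWb, hΦW,
      Matrix.mul_assoc, Matrix.mul_assoc]
  subst hZ
  have h1 : (Wb * Pb + W * P)ᵀ * Φ * (Wb * Pb + W * P)
      = Pbᵀ * (Λb * Pb) + Pᵀ * (Λ * P) := by
    rw [Matrix.mul_assoc, hA]
    simp [Matrix.transpose_add, Matrix.transpose_mul, Matrix.add_mul, Matrix.mul_add,
      Matrix.mul_assoc, hW', hWb', hWbW', hWWb']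
  have h2 : (Wb * Pb + W * P)ᵀ * (Wb * Pb + W * P) = Pbᵀ * Pb + Pᵀ * P := by
    simp [Matrix.transpose_add, Matrix.transpose_mul, Matrix.add_mul, Matrix.mul_add,
      Matrix.mul_assoc, hW', hWb', hWbW', hWWb']
  have hP' : P = -Pᵀ := by rw [hP]; simp
  rw [h1, h2, Matrix.trace_add, Matrix.add_mul, Matrix.trace_add]
  have e1 : Pᵀ * (Λ * P) = P * Λ * Pᵀ := by
    calc Pᵀ * (Λ * P) = (-P) * (Λ * P) := by rw [hP]
      _ = -(P * Λ * P) := by rw [Matrix.neg_mul, Matrix.mul_assoc]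
      _ = -(P * Λ * (-Pᵀ)) := by rw [← hP']
      _ = P * Λ * Pᵀ := by rw [Matrix.mul_neg, neg_neg]
  have e2 : Matrix.trace (Pbᵀ * Pb * Λ) = Matrix.trace (Pb * Λ * Pbᵀ) := by
    rw [Matrix.mul_assoc, Matrix.trace_mul_comm, Matrix.mul_assoc]
  have e3 : Matrix.trace (Pᵀ * P * Λ) = Matrix.trace (P * Λ * Pᵀ) := by
    rw [Matrix.mul_assoc, Matrix.trace_mul_comm, Matrix.mul_assoc]
  rw [e1, e2, e3, ← Matrix.mul_assoc]
  ring
end
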